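/- Let f_1,…,f_M be unit-norm vectors in ℝ^N with worst-case coherence μ := max_{i≠j} |⟨f_i,f_j⟩|, and let K ≥ 2 be an integer with 2K ≤ M. Then for every pair of nonempty subsets 𝒦, 𝒦' ⊆ {1,…,M} with |𝒦| ≤ K and |𝒦'| ≤ K, and every index m with m ∈ 𝒦 and m ∉ 𝒦', the distance between the equal-weight averages satisfies ‖(1/|𝒦|) Σ_{k∈𝒦} f_k − (1/|𝒦'|) Σ_{k∈𝒦'} f_k‖ ≥ √((1−(2K−1)μ)/(K(K−1))). -/

import Mathlib

/-!
Write the difference of the two averages as `∑ cᵢ fᵢ` over `𝒦 ∪ 𝒦'`, a set of at most `2K`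
indices. Bounding the off-diagonal entries of the Gram matrix by `μ` (a Gershgorin-type
estimate) gives `‖∑ cᵢ fᵢ‖² ≥ (1 - (2K - 1) μ) ∑ cᵢ²`. Finally `∑ cᵢ² = 1/a + 1/b - 2t/(ab)`,
where `a, b ≤ K` are the sizes of the two sets and `t` that of their intersection; since `m`
keeps `𝒦` from lying inside `𝒦'`, this is at least `1/(K(K-1))`.
-/

open scoped RealInnerProductSpace

/-- The worst-case coherence `μ = max_{i ≠ j} |⟨f_i, f_j⟩|` of a family of vectors. -/
noncomputable def coherence {n : ℕ} {M : ℕ} (f : Fin M → EuclideanSpace ℝ (Fin n)) : ℝ :=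
  ⨆ (p : {p : Fin M × Fin M // p.1 ≠ p.2}), |⟪f p.1.1, f p.1.2⟫|

open Finset

theorem coherence_nonneg {n M : ℕ} (f : Fin M → EuclideanSpace ℝ (Fin n)) :
    0 ≤ coherence f :=
  Real.iSup_nonneg fun _ => abs_nonneg _

theorem abs_inner_le_coherence {n M : ℕ} (f : Fin M → EuclideanSpace ℝ (Fin n))
    {i j : Fin M} (h : i ≠ j) : |⟪f i, f j⟫| ≤ coherence f :=
  le_ciSup (f := fun p : {p : Fin M × Fin M // p.1 ≠ p.2} => |⟪f p.1.1, f p.1.2⟫|)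
    (Set.finite_range _).bddAbove ⟨(i, j), h⟩

section Gram

variable {E ι : Type*} [NormedAddCommGroup E] [InnerProductSpace ℝ E]

theorem norm_sum_smul_sq_eq_sum_sum_inner (s : Finset ι) (c : ι → ℝ) (f : ι → E) :
    ‖∑ i ∈ s, c i • f i‖ ^ 2 = ∑ i ∈ s, ∑ j ∈ s, c i * c j * ⟪f i, f j⟫ := by
  rw [← real_inner_self_eq_norm_sq, sum_inner]
  refine sum_congr rfl fun i _ => ?_
  rw [inner_sum]
  refine sum_congr rfl fun j _ => ?_
  rw [real_inner_smul_left, real_inner_smul_right, mul_assoc]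

theorem one_sub_mul_sum_sq_le_norm_sum_smul_sq [DecidableEq ι] (s : Finset ι) (c : ι → ℝ)
    (f : ι → E) {μ : ℝ} (hμ : 0 ≤ μ) (hunit : ∀ i ∈ s, ‖f i‖ = 1)
    (hcoh : ∀ i ∈ s, ∀ j ∈ s, i ≠ j → |⟪f i, f j⟫| ≤ μ) :
    (1 - (#s - 1) * μ) * ∑ i ∈ s, c i ^ 2 ≤ ‖∑ i ∈ s, c i • f i‖ ^ 2 := by
  have hterm : ∀ i ∈ s, ∀ j ∈ s, (if i = j then (1 + μ) * c i ^ 2 else 0)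
      - μ * (|c i| * |c j|) ≤ c i * c j * ⟪f i, f j⟫ := by
    intro i hi j hj
    by_cases hij : i = j
    · subst hij
      rw [if_pos rfl, real_inner_self_eq_norm_sq, hunit i hi, abs_mul_abs_self]
      linarith
    · have hbound : |c i * c j * ⟪f i, f j⟫| ≤ μ * (|c i| * |c j|) := by
        rw [abs_mul, abs_mul, mul_comm μ]
        exact mul_le_mul_of_nonneg_left (hcoh i hi j hj hij) (by positivity)
      rw [if_neg hij, zero_sub]
      linarith [neg_abs_le (c i * c j * ⟪f i, f j⟫)]
  have hcs : (∑ i ∈ s, |c i|) ^ 2 ≤ #s * ∑ i ∈ s, c i ^ 2 := by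
    simpa only [sq_abs] using sq_sum_le_card_mul_sum_sq (s := s) (f := fun i => |c i|)
  calc (1 - (#s - 1) * μ) * ∑ i ∈ s, c i ^ 2
      ≤ (1 + μ) * ∑ i ∈ s, c i ^ 2 - μ * (∑ i ∈ s, |c i|) ^ 2 := by nlinarith
    _ = ∑ i ∈ s, ∑ j ∈ s,
          ((if i = j then (1 + μ) * c i ^ 2 else 0) - μ * (|c i| * |c j|)) := by
      simp only [sum_sub_distrib, sum_ite_eq, sum_ite_mem, inter_self, ← mul_sum, sq,
        sum_mul_sum]
    _ ≤ ‖∑ i ∈ s, c i • f i‖ ^ 2 := by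
      rw [norm_sum_smul_sq_eq_sum_sum_inner]
      exact sum_le_sum fun i hi => sum_le_sum fun j hj => hterm i hi j hj

end Gram

section AvgWeight

variable {ι : Type*} [DecidableEq ι]

noncomputable def avgWeight (s : Finset ι) (i : ι) : ℝ :=
  if i ∈ s then (#s : ℝ)⁻¹ else 0

theorem sum_avgWeight_smul {E : Type*} [AddCommGroup E] [Module ℝ E] {s u : Finset ι}
    (hsu : s ⊆ u) (f : ι → E) :
    ∑ i ∈ u, avgWeight s i • f i = (#s : ℝ)⁻¹ • ∑ i ∈ s, f i := by
  simp only [avgWeight, ite_smul, zero_smul, sum_ite_mem, inter_eq_right.mpr hsu, smul_sum]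

theorem sum_avgWeight_mul_avgWeight {s s' u : Finset ι} (hsu : s ⊆ u) :
    ∑ i ∈ u, avgWeight s i * avgWeight s' i = #(s ∩ s') * ((#s : ℝ)⁻¹ * (#s' : ℝ)⁻¹) := by
  have hu : u ∩ (s ∩ s') = s ∩ s' := inter_eq_right.mpr (inter_subset_left.trans hsu)
  simp only [avgWeight, ite_zero_mul_ite_zero, ← mem_inter, sum_ite_mem, hu, sum_const,
    nsmul_eq_mul]

-- With `(#∅ : ℝ)⁻¹ = 0` this also holds when `s` or `s'` is empty.
theorem sum_sq_avgWeight_sub {s s' u : Finset ι} (hsu : s ⊆ u) (hs'u : s' ⊆ u) :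
    ∑ i ∈ u, (avgWeight s i - avgWeight s' i) ^ 2
      = (#s : ℝ)⁻¹ + (#s' : ℝ)⁻¹ - 2 * #(s ∩ s') * ((#s : ℝ)⁻¹ * (#s' : ℝ)⁻¹) := by
  have hself : ∀ r : Finset ι, (#r : ℝ) * ((#r : ℝ)⁻¹ * (#r : ℝ)⁻¹) = (#r : ℝ)⁻¹ := fun r => by
    rcases eq_or_ne (#r : ℝ) 0 with h | h
    · simp [h]
    · field_simp
  calc ∑ i ∈ u, (avgWeight s i - avgWeight s' i) ^ 2
      = ∑ i ∈ u, avgWeight s i * avgWeight s i + ∑ i ∈ u, avgWeight s' i * avgWeight s' i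
          - 2 * ∑ i ∈ u, avgWeight s i * avgWeight s' i := by
        rw [mul_sum, ← sum_add_distrib, ← sum_sub_distrib]
        exact sum_congr rfl fun i _ => by ring
    _ = _ := by
        rw [sum_avgWeight_mul_avgWeight hsu, sum_avgWeight_mul_avgWeight hs'u,
          sum_avgWeight_mul_avgWeight hsu, inter_self, inter_self, hself, hself]
        ring

end AvgWeight

theorem inv_mul_pred_le_inv_add_inv_sub {a b t K : ℕ} (hK : 2 ≤ K) (ha : a ≤ K) (hb : b ≤ K)
    (hta : t < a) (htb : t ≤ b) :
    ((K : ℝ) * (K - 1))⁻¹ ≤ (a : ℝ)⁻¹ + (b : ℝ)⁻¹ - 2 * t * ((a : ℝ)⁻¹ * (b : ℝ)⁻¹) := by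
  have hK' : (2 : ℝ) ≤ K := by exact_mod_cast hK
  have ha' : (a : ℝ) ≤ K := by exact_mod_cast ha
  have hb' : (b : ℝ) ≤ K := by exact_mod_cast hb
  have hta' : (t : ℝ) + 1 ≤ a := by exact_mod_cast hta
  have hKK : (0 : ℝ) < K * (K - 1) := by nlinarith
  rcases Nat.eq_zero_or_pos b with rfl | hb0
  · obtain rfl : t = 0 := by omega
    simp only [CharP.cast_eq_zero, inv_zero, add_zero, mul_zero, sub_zero]
    exact inv_anti₀ (by linarith) (by nlinarith)
  have hb0' : (1 : ℝ) ≤ b := by exact_mod_cast hb0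
  have ha0 : (0 : ℝ) < a := by linarith [(t.cast_nonneg : (0 : ℝ) ≤ t)]
  have hrhs : (a : ℝ)⁻¹ + (b : ℝ)⁻¹ - 2 * t * ((a : ℝ)⁻¹ * (b : ℝ)⁻¹)
      = (a + b - 2 * t) / (a * b) := by
    field_simp
    ring
  rw [hrhs, inv_eq_one_div, div_le_div_iff₀ hKK (by nlinarith)]
  rcases htb.lt_or_eq with htb | rfl
  · have htb' : (t : ℝ) + 1 ≤ b := by exact_mod_cast htb
    nlinarith [mul_le_mul ha' hb' (by linarith) (by linarith)]
  · nlinarith [mul_le_mul ha' (show (t:ℝ) ≤ K - 1 by linarith) (by linarith) (by linarith)]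

theorem inv_mul_pred_le_sum_sq_avgWeight_sub {ι : Type*} [DecidableEq ι] {s s' : Finset ι}
    {K : ℕ} (hK : 2 ≤ K) (hs : #s ≤ K) (hs' : #s' ≤ K) (hss' : ¬s ⊆ s') :
    ((K : ℝ) * (K - 1))⁻¹ ≤ ∑ i ∈ s ∪ s', (avgWeight s i - avgWeight s' i) ^ 2 := by
  rw [sum_sq_avgWeight_sub subset_union_left subset_union_right]
  refine inv_mul_pred_le_inv_add_inv_sub hK hs hs' (card_lt_card ?_)
    (card_le_card inter_subset_right)
  exact ssubset_of_subset_of_ne inter_subset_left (mt inter_eq_left.mp hss')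

theorem stmt_3_general {N M : ℕ} (f : Fin M → EuclideanSpace ℝ (Fin N))
    (hunit : ∀ i, ‖f i‖ = 1)
    (K : ℕ) (hK : 2 ≤ K)
    (𝒦 𝒦' : Finset (Fin M))
    (hc : 𝒦.card ≤ K) (hc' : 𝒦'.card ≤ K)
    (m : Fin M) (hm : m ∈ 𝒦) (hm' : m ∉ 𝒦') :
    Real.sqrt ((1 - (2 * (K : ℝ) - 1) * coherence f) / ((K : ℝ) * ((K : ℝ) - 1))) ≤
      ‖(𝒦.card : ℝ)⁻¹ • ∑ k ∈ 𝒦, f k - (𝒦'.card : ℝ)⁻¹ • ∑ k ∈ 𝒦', f k‖ := by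
  have hμ : 0 ≤ coherence f := coherence_nonneg f
  set c := fun i => avgWeight 𝒦 i - avgWeight 𝒦' i
  have hsum : (#𝒦 : ℝ)⁻¹ • ∑ k ∈ 𝒦, f k - (#𝒦' : ℝ)⁻¹ • ∑ k ∈ 𝒦', f k
      = ∑ i ∈ 𝒦 ∪ 𝒦', c i • f i := by
    simp only [c, sub_smul, sum_sub_distrib, sum_avgWeight_smul subset_union_left,
      sum_avgWeight_smul subset_union_right]
  have hgram := one_sub_mul_sum_sq_le_norm_sum_smul_sq (𝒦 ∪ 𝒦') c f hμ
    (fun i _ => hunit i) (fun i _ j _ hij => abs_inner_le_coherence f hij)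
  have hcard : (#(𝒦 ∪ 𝒦') : ℝ) ≤ 2 * K := by
    exact_mod_cast (card_union_le 𝒦 𝒦').trans (by omega)
  have hsq := inv_mul_pred_le_sum_sq_avgWeight_sub hK hc hc' (not_subset.mpr ⟨m, hm, hm'⟩)
  have hK' : (2 : ℝ) ≤ K := by exact_mod_cast hK
  rw [Real.sqrt_le_left (norm_nonneg _), hsum, div_eq_mul_inv]
  rcases le_total 0 (1 - (2 * (K : ℝ) - 1) * coherence f) with hpos | hneg
  · calc (1 - (2 * (K : ℝ) - 1) * coherence f) * ((K : ℝ) * (K - 1))⁻¹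
        ≤ (1 - (2 * (K : ℝ) - 1) * coherence f) * ∑ i ∈ 𝒦 ∪ 𝒦', c i ^ 2 :=
          mul_le_mul_of_nonneg_left hsq hpos
      _ ≤ (1 - (#(𝒦 ∪ 𝒦') - 1) * coherence f) * ∑ i ∈ 𝒦 ∪ 𝒦', c i ^ 2 := by
          gcongr
      _ ≤ _ := hgram
  · have hKK : (0 : ℝ) ≤ ((K : ℝ) * (K - 1))⁻¹ := inv_nonneg.mpr (by nlinarith)
    exact (mul_nonpos_of_nonpos_of_nonneg hneg hKK).trans (by positivity)

theorem stmt_3 {N M : ℕ} (f : Fin M → EuclideanSpace ℝ (Fin N))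
    (hunit : ∀ i, ‖f i‖ = 1)
    (K : ℕ) (hK : 2 ≤ K) (h2K : 2 * K ≤ M)
    (𝒦 𝒦' : Finset (Fin M)) (h𝒦 : 𝒦.Nonempty) (h𝒦' : 𝒦'.Nonempty)
    (hc : 𝒦.card ≤ K) (hc' : 𝒦'.card ≤ K)
    (m : Fin M) (hm : m ∈ 𝒦) (hm' : m ∉ 𝒦') :
    Real.sqrt ((1 - (2 * (K : ℝ) - 1) * coherence f) / ((K : ℝ) * ((K : ℝ) - 1))) ≤
      ‖(𝒦.card : ℝ)⁻¹ • ∑ k ∈ 𝒦, f k - (𝒦'.card : ℝ)⁻¹ • ∑ k ∈ 𝒦', f k‖ :=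
  stmt_3_general f hunit K hK 𝒦 𝒦' hc hc' m hm hm'
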